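/- arXiv:0806.2901 — 4 statements merged into one kernel-verified Lean document; each statement's English description precedes it below -/
import Mathlib

section
/- Suppose a trend-free order π : {1,…,k} → {1,…,v} exists, i.e., h_i = ∑_{p : π(p)=i} φ(p) = 0 for all i. Then for each i, n_i·(k+1) is even, where n_i is the replication of treatment i. -/
open Finset

/-- The linear orthonormal polynomial on `{1,…,k}`. -/
noncomputable def phi (k p : ℕ) : ℝ :=
  Real.sqrt (3 / ((k : ℝ) * ((k : ℝ) ^ 2 - 1))) * (2 * (p : ℝ) - (k : ℝ) - 1)

/-- Replication `n_i` of treatment `i` in the order `π` on positions `{1,…,k}`. -/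
def reps (v k : ℕ) (π : ℕ → Fin v) (i : Fin v) : ℕ :=
  ((Icc 1 k).filter (fun p => π p = i)).card

/-- The set of coincidence pairs `P(π) = {(p,q) : p < q, π(p) = π(q)}`. -/
def coincPairs (v k : ℕ) (π : ℕ → Fin v) : Finset (ℕ × ℕ) :=
  ((Icc 1 k ×ˢ Icc 1 k).filter (fun pq => pq.1 < pq.2 ∧ π pq.1 = π pq.2))

/-- `s(π)`, the number of coincidence pairs. -/
def sPairs (v k : ℕ) (π : ℕ → Fin v) : ℕ := (coincPairs v k π).card

/-- `h_i(π) = ∑_{p : π(p) = i} φ(p)`. -/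
noncomputable def hrep (v k : ℕ) (π : ℕ → Fin v) (i : Fin v) : ℝ :=
  ∑ p ∈ (Icc 1 k).filter (fun p => π p = i), phi k p

/-- `T(π) = ∑_{p<q, π(p)=π(q)} φ(p)φ(q)`. -/
noncomputable def Tpi (v k : ℕ) (π : ℕ → Fin v) : ℝ :=
  ∑ pq ∈ coincPairs v k π, phi k pq.1 * phi k pq.2

lemma phi_coeff_pos {k : ℕ} (hk : 2 ≤ k) :
    0 < Real.sqrt (3 / ((k : ℝ) * ((k : ℝ) ^ 2 - 1))) := by
  have hkR : (2 : ℝ) ≤ k := by exact_mod_cast hk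
  apply Real.sqrt_pos.mpr
  apply div_pos three_pos
  nlinarith

lemma hrep_eq_mul_sum (v k : ℕ) (π : ℕ → Fin v) (i : Fin v) :
    hrep v k π i = Real.sqrt (3 / ((k : ℝ) * ((k : ℝ) ^ 2 - 1))) *
      ∑ p ∈ (Icc 1 k).filter (fun p => π p = i), (2 * (p : ℝ) - k - 1) := by
  rw [hrep, mul_sum]
  rfl

lemma two_mul_sum_eq_card_mul_of_sum_eq_zero {S : Finset ℕ} {k : ℕ}
    (h : ∑ p ∈ S, (2 * (p : ℝ) - k - 1) = 0) :
    2 * ∑ p ∈ S, p = #S * (k + 1) := by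
  simp only [sum_sub_distrib, sum_const, nsmul_eq_mul, ← mul_sum] at h
  have hR : ((2 * ∑ p ∈ S, p : ℕ) : ℝ) = (#S * (k + 1) : ℕ) := by push_cast; linarith
  exact_mod_cast hR

theorem trend_free_parity_general (v k : ℕ) (hk : 2 ≤ k) (π : ℕ → Fin v)
    (htf : ∀ i, hrep v k π i = 0) :
    ∀ i, Even (reps v k π i * (k + 1)) := by
  intro i
  have hcentered : ∑ p ∈ (Icc 1 k).filter (fun p => π p = i), (2 * (p : ℝ) - k - 1) = 0 := by
    have h := htf i
    rw [hrep_eq_mul_sum] at h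
    exact (mul_eq_zero.mp h).resolve_left (phi_coeff_pos hk).ne'
  exact ⟨_, (two_mul_sum_eq_card_mul_of_sum_eq_zero hcentered).symm.trans (two_mul _)⟩

theorem trend_free_parity (v k : ℕ) (hv : 0 < v) (hk : 2 ≤ k) (π : ℕ → Fin v)
    (htf : ∀ i, hrep v k π i = 0) :
    ∀ i, Even (reps v k π i * (k + 1)) :=
  trend_free_parity_general v k hk π htf
end

section
/- (Property (5.7)) Let u, v, k be given and suppose π minimizes ∑_{i=1}^v n_i² among all orders π : {1,…,k} → {1,…,v} having exactly u treatments with odd replication. If two replication values j₀, j₁ each occur among n_1,…,n_v (i.e., s_{j₀} > 0 and s_{j₁} > 0), then |j₁ − j₀| ≤ 2. -/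
open Finset

/-! Moving two units of replication from a treatment replicated `j₁ ≥ j₀ + 3` times to one
replicated `j₀` times keeps every parity, hence the number `u` of odd replications, and changes
`∑ nᵢ²` by `4 (j₀ - j₁ + 2) < 0`; so a minimizing order has no such pair. -/

section Fibers

variable {α β : Type*} [DecidableEq α] [DecidableEq β]

theorem card_filter_update_add (s : Finset α) (f : α → β) {p : α} (hp : p ∈ s) (b c : β) :
    #(s.filter (fun x => Function.update f p b x = c)) + (if f p = c then 1 else 0) =
      #(s.filter (fun x => f x = c)) + (if b = c then 1 else 0) := by
  simp only [card_filter]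
  rw [← add_sum_erase s _ hp, ← add_sum_erase s _ hp, Function.update_self]
  have hrest : ∑ x ∈ s.erase p, (if Function.update f p b x = c then 1 else 0) =
      ∑ x ∈ s.erase p, (if f x = c then 1 else 0) :=
    sum_congr rfl fun x hx => by rw [Function.update_of_ne (ne_of_mem_erase hx)]
  rw [hrest]
  ring

theorem exists_card_filter_transfer_two (s : Finset α) (f : α → β) (c₀ : β) {c₁ : β}
    (hc₁ : 2 ≤ #(s.filter (fun x => f x = c₁))) :
    ∃ g : α → β, ∀ c, #(s.filter (fun x => g x = c)) + (if c₁ = c then 2 else 0) =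
      #(s.filter (fun x => f x = c)) + (if c₀ = c then 2 else 0) := by
  obtain ⟨p, hp, q, hq, hpq⟩ := one_lt_card.mp hc₁
  rw [mem_filter] at hp hq
  refine ⟨Function.update (Function.update f p c₀) q c₀, fun c => ?_⟩
  have hfirst := card_filter_update_add s f hp.1 c₀ c
  have hsecond := card_filter_update_add s (Function.update f p c₀) hq.1 c₀ c
  rw [Function.update_of_ne (Ne.symm hpq), hq.2] at hsecond
  rw [hp.2] at hfirst
  split_ifs at hfirst hsecond ⊢ <;> omega

end Fibers

section Transfer

variable {ι : Type*} [Fintype ι] [DecidableEq ι] {m n : ι → ℕ} {i₀ i₁ : ι}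

theorem card_filter_odd_eq_of_transfer
    (h : ∀ i, m i + (if i₁ = i then 2 else 0) = n i + (if i₀ = i then 2 else 0)) :
    #(univ.filter (fun i => Odd (m i))) = #(univ.filter (fun i => Odd (n i))) := by
  refine congrArg card (filter_congr fun i _ => ?_)
  have hi := h i
  rw [Nat.odd_iff, Nat.odd_iff]
  split_ifs at hi <;> omega

theorem sum_sq_lt_of_transfer
    (h : ∀ i, m i + (if i₁ = i then 2 else 0) = n i + (if i₀ = i then 2 else 0))
    (hgap : n i₀ + 3 ≤ n i₁) :
    ∑ i, m i ^ 2 < ∑ i, n i ^ 2 := by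
  have hne : i₀ ≠ i₁ := by rintro rfl; omega
  have hm₀ : m i₀ = n i₀ + 2 := by simpa [Ne.symm hne] using h i₀
  have hm₁ : m i₁ + 2 = n i₁ := by simpa [hne] using h i₁
  have hrest : ∑ i ∈ univ \ {i₀, i₁}, m i ^ 2 = ∑ i ∈ univ \ {i₀, i₁}, n i ^ 2 :=
    sum_congr rfl fun i hi => by
      simp only [mem_sdiff, mem_univ, mem_insert, mem_singleton, not_or, true_and] at hi
      simpa [Ne.symm hi.1, Ne.symm hi.2] using h i
  rw [← sum_sdiff (subset_univ {i₀, i₁}) (f := fun i => m i ^ 2),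
    ← sum_sdiff (subset_univ {i₀, i₁}) (f := fun i => n i ^ 2), hrest,
    sum_pair hne, sum_pair hne]
  nlinarith

end Transfer

theorem reps_le_add_two_of_minimal (v k u : ℕ) (π : ℕ → Fin v)
    (hu : #(univ.filter (fun i : Fin v => Odd (reps v k π i))) = u)
    (hmin : ∀ π' : ℕ → Fin v, #(univ.filter (fun i : Fin v => Odd (reps v k π' i))) = u →
      ∑ i, (reps v k π i) ^ 2 ≤ ∑ i, (reps v k π' i) ^ 2)
    (i₀ i₁ : Fin v) :
    reps v k π i₁ ≤ reps v k π i₀ + 2 := by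
  by_contra! hgap
  obtain ⟨π', hπ'⟩ := exists_card_filter_transfer_two (Icc 1 k) π i₀
    (show 2 ≤ reps v k π i₁ by omega)
  have hparity := (card_filter_odd_eq_of_transfer (m := reps v k π') hπ').trans hu
  exact (hmin π' hparity).not_gt (sum_sq_lt_of_transfer (m := reps v k π') hπ' hgap)

theorem minimizing_order_replications_close_general (v k u : ℕ)
    (π : ℕ → Fin v)
    (hu : (Finset.univ.filter (fun i : Fin v => Odd (reps v k π i))).card = u)
    (hmin : ∀ π' : ℕ → Fin v,
      (Finset.univ.filter (fun i : Fin v => Odd (reps v k π' i))).card = u →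
      ∑ i, (reps v k π i) ^ 2 ≤ ∑ i, (reps v k π' i) ^ 2)
    (j₀ j₁ : ℕ) (h0 : ∃ i, reps v k π i = j₀) (h1 : ∃ i, reps v k π i = j₁) :
    j₁ ≤ j₀ + 2 ∧ j₀ ≤ j₁ + 2 := by
  obtain ⟨i₀, rfl⟩ := h0
  obtain ⟨i₁, rfl⟩ := h1
  exact ⟨reps_le_add_two_of_minimal v k u π hu hmin i₀ i₁,
    reps_le_add_two_of_minimal v k u π hu hmin i₁ i₀⟩

theorem minimizing_order_replications_close (v k u : ℕ) (hv : 0 < v) (hk : 0 < k)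
    (π : ℕ → Fin v)
    (hu : (Finset.univ.filter (fun i : Fin v => Odd (reps v k π i))).card = u)
    (hmin : ∀ π' : ℕ → Fin v,
      (Finset.univ.filter (fun i : Fin v => Odd (reps v k π' i))).card = u →
      ∑ i, (reps v k π i) ^ 2 ≤ ∑ i, (reps v k π' i) ^ 2)
    (j₀ j₁ : ℕ) (h0 : ∃ i, reps v k π i = j₀) (h1 : ∃ i, reps v k π i = j₁) :
    j₁ ≤ j₀ + 2 ∧ j₀ ≤ j₁ + 2 :=
  minimizing_order_replications_close_general v k u π hu hmin j₀ j₁ h0 h1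
end

section
/- Bound (5.5): For any order π : {1,…,k} → {1,…,v} and λ₀, λ₁ ≥ 0, F(π) = −λ₀s(π) − λ₁T(π) ≤ (1/2)·∑_{p ∈ S} (λ₁φ(p)² − λ₀), where S is the set of positions occupied by treatments appearing at least twice in π. -/
open Finset

/-!
Colour the positions by `π` and let `S` be the set of positions whose colour occurs at least
twice. Every coincidence pair lies in `S × S`, so `∑_{p ∈ S} φ(p)² + 2 T(π)` is the sum of
`φ(p) φ(q)` over ordered pairs of `S` of equal colour, i.e. the sum of the squares of the
colour-class sums of `φ` over `S`; hence it is nonnegative. Each `p ∈ S` is the first entry of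
an off-diagonal pair of equal colour, and there are `2 s(π)` of those, so `|S| ≤ 2 s(π)`.
Weighting the two inequalities by `λ₁` and `λ₀` gives the bound.
-/

section ColourClasses

variable {α β : Type*} [DecidableEq β] (s : Finset α) (f : α → β)

theorem sum_filter_eq_mul_nonneg {R : Type*} [CommRing R] [LinearOrder R] [IsStrictOrderedRing R]
    (w : α → R) : 0 ≤ ∑ pq ∈ (s ×ˢ s).filter (fun pq => f pq.1 = f pq.2), w pq.1 * w pq.2 := by
  rw [← sum_fiberwise_of_maps_to (g := fun pq => f pq.1) (t := s.image f)
    (fun pq hpq => mem_image_of_mem f (mem_product.1 (mem_filter.1 hpq).1).1)]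
  refine sum_nonneg fun i _ => ?_
  have hfibre : ((s ×ˢ s).filter (fun pq => f pq.1 = f pq.2)).filter (fun pq => f pq.1 = i) =
      s.filter (f · = i) ×ˢ s.filter (f · = i) := by
    ext; simp only [mem_filter, mem_product]; grind
  rw [hfibre, sum_product, ← sum_mul_sum]
  exact mul_self_nonneg _

def repeatedColour : Finset α := s.filter fun p => 2 ≤ #(s.filter (f · = f p))

variable {s f} in
theorem mem_repeatedColour_of_ne {p q : α} (hp : p ∈ s) (hq : q ∈ s) (hne : p ≠ q)
    (h : f p = f q) : p ∈ repeatedColour s f :=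
  mem_filter.2 ⟨hp, one_lt_card.2 ⟨p, by simp [hp], q, by simp [hq, h], hne⟩⟩

variable [LinearOrder α]

theorem sum_filter_ne_eq_two_nsmul_sum_filter_lt {M : Type*} [AddCommMonoid M] (g : α × α → M)
    (hg : ∀ a b, g (a, b) = g (b, a)) :
    ∑ pq ∈ (s ×ˢ s).filter (fun pq => pq.1 ≠ pq.2 ∧ f pq.1 = f pq.2), g pq =
      2 • ∑ pq ∈ (s ×ˢ s).filter (fun pq => pq.1 < pq.2 ∧ f pq.1 = f pq.2), g pq := by
  have hsplit : (s ×ˢ s).filter (fun pq => pq.1 ≠ pq.2 ∧ f pq.1 = f pq.2) =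
      (s ×ˢ s).filter (fun pq => pq.1 < pq.2 ∧ f pq.1 = f pq.2) ∪
        (s ×ˢ s).filter (fun pq => pq.2 < pq.1 ∧ f pq.1 = f pq.2) := by
    ext; simp only [mem_filter, mem_union, ne_iff_lt_or_gt]; tauto
  have hswap : ∑ pq ∈ (s ×ˢ s).filter (fun pq => pq.2 < pq.1 ∧ f pq.1 = f pq.2), g pq =
      ∑ pq ∈ (s ×ˢ s).filter (fun pq => pq.1 < pq.2 ∧ f pq.1 = f pq.2), g pq :=
    sum_nbij' Prod.swap Prod.swap (by simp +contextual) (by simp +contextual) (by simp) (by simp)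
      fun pq _ => hg pq.1 pq.2
  rw [hsplit, sum_union (disjoint_filter.2 fun _ _ h h' => lt_asymm h.1 h'.1), hswap, two_nsmul]

theorem sum_sq_add_two_mul_sum_filter_lt_nonneg {R : Type*} [CommRing R] [LinearOrder R]
    [IsStrictOrderedRing R] (w : α → R) :
    0 ≤ ∑ p ∈ s, w p ^ 2 +
      2 * ∑ pq ∈ (s ×ˢ s).filter (fun pq => pq.1 < pq.2 ∧ f pq.1 = f pq.2), w pq.1 * w pq.2 := by
  have hdiag : ((s ×ˢ s).filter (fun pq => f pq.1 = f pq.2)).filter (fun pq => pq.1 = pq.2) =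
      s.diag := by
    ext ⟨p, q⟩; simp only [mem_filter, mem_product, mem_diag]; grind
  have hoff : ((s ×ˢ s).filter (fun pq => f pq.1 = f pq.2)).filter (fun pq => ¬pq.1 = pq.2) =
      (s ×ˢ s).filter (fun pq => pq.1 ≠ pq.2 ∧ f pq.1 = f pq.2) := by
    rw [filter_filter]; simp only [and_comm]
  have := sum_filter_eq_mul_nonneg s f w
  rw [← sum_filter_add_sum_filter_not _ (fun pq => pq.1 = pq.2), hdiag, hoff,
    sum_filter_ne_eq_two_nsmul_sum_filter_lt s f _ fun a b => mul_comm _ _, sum_diag,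
    nsmul_eq_mul, Nat.cast_ofNat] at this
  simpa only [sq] using this

theorem filter_lt_repeatedColour_eq :
    (repeatedColour s f ×ˢ repeatedColour s f).filter (fun pq => pq.1 < pq.2 ∧ f pq.1 = f pq.2) =
      (s ×ˢ s).filter (fun pq => pq.1 < pq.2 ∧ f pq.1 = f pq.2) := by
  ext ⟨p, q⟩
  simp only [mem_filter, mem_product]
  refine ⟨fun ⟨⟨hp, hq⟩, h⟩ => ⟨⟨(mem_filter.1 hp).1, (mem_filter.1 hq).1⟩, h⟩,
    fun ⟨⟨hp, hq⟩, hlt, h⟩ => ⟨⟨?_, ?_⟩, hlt, h⟩⟩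
  · exact mem_repeatedColour_of_ne hp hq hlt.ne h
  · exact mem_repeatedColour_of_ne hq hp hlt.ne' h.symm

theorem card_repeatedColour_le :
    #(repeatedColour s f) ≤ 2 * #((s ×ˢ s).filter (fun pq => pq.1 < pq.2 ∧ f pq.1 = f pq.2)) := by
  calc #(repeatedColour s f)
      ≤ #((s ×ˢ s).filter (fun pq => pq.1 ≠ pq.2 ∧ f pq.1 = f pq.2)) := by
        refine card_le_card_of_surjOn Prod.fst fun p hp => ?_
        obtain ⟨hps, hcard⟩ := mem_filter.1 hp
        obtain ⟨q, hq, hqp⟩ := exists_mem_ne hcard p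
        obtain ⟨hqs, hfq⟩ := mem_filter.1 hq
        exact ⟨(p, q), by simp [hps, hqs, hqp.symm, hfq], rfl⟩
    _ = 2 * #((s ×ˢ s).filter (fun pq => pq.1 < pq.2 ∧ f pq.1 = f pq.2)) := by
        rw [card_eq_sum_ones, card_eq_sum_ones,
          sum_filter_ne_eq_two_nsmul_sum_filter_lt s f _ fun _ _ => rfl, smul_eq_mul]

end ColourClasses

theorem F_upper_bound_general (v k : ℕ) (l0 l1 : ℝ)
    (hl0 : 0 ≤ l0) (hl1 : 0 ≤ l1) (π : ℕ → Fin v) :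
    -l0 * (sPairs v k π : ℝ) - l1 * Tpi v k π ≤
      (1 / 2) * ∑ p ∈ (Icc 1 k).filter (fun p => 2 ≤ reps v k π (π p)),
        (l1 * (phi k p) ^ 2 - l0) := by
  have hcard : (#(repeatedColour (Icc 1 k) π) : ℝ) ≤ 2 * sPairs v k π := by
    exact_mod_cast card_repeatedColour_le (Icc 1 k) π
  have hT : 0 ≤ ∑ p ∈ repeatedColour (Icc 1 k) π, phi k p ^ 2 + 2 * Tpi v k π := by
    have := sum_sq_add_two_mul_sum_filter_lt_nonneg (repeatedColour (Icc 1 k) π) π (phi k)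
    rwa [filter_lt_repeatedColour_eq] at this
  change _ ≤ 1 / 2 * ∑ p ∈ repeatedColour (Icc 1 k) π, (l1 * phi k p ^ 2 - l0)
  rw [sum_sub_distrib, ← mul_sum, sum_const, nsmul_eq_mul]
  linarith [mul_nonneg hl1 hT, mul_nonneg hl0 (sub_nonneg.2 hcard)]

theorem F_upper_bound (v k : ℕ) (hv : 0 < v) (hk : 2 ≤ k) (l0 l1 : ℝ)
    (hl0 : 0 ≤ l0) (hl1 : 0 ≤ l1) (π : ℕ → Fin v) :
    -l0 * (sPairs v k π : ℝ) - l1 * Tpi v k π ≤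
      (1 / 2) * ∑ p ∈ (Icc 1 k).filter (fun p => 2 ≤ reps v k π (π p)),
        (l1 * (phi k p) ^ 2 - l0) :=
  F_upper_bound_general v k l0 l1 hl0 hl1 π
end

section
/- Let k < 2v, λ₀ ∈ [0,1/k], λ₁ ∈ [0,1], and define s* = max{p integer : 1 ≤ p < (k+1)/2, λ₁φ(p)² > λ₀} (s* = 0 if λ₁φ(1)² ≤ λ₀). If k ≤ v + s*, then the order π_{s*} = (i₁,…,i_{s*}, i_{s*+1},…,i_{k−s*}, i_{s*},…,i₁) on k−s* distinct treatments attains F(π_{s*}) = ∑_{p=1}^{s*}(λ₁φ(p)² − λ₀) = max over all orders π of F(π). -/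
open Finset

/-- `F(π) = ∑_{p<q, π(p)=π(q)} (−λ₀ − λ₁φ(p)φ(q))`. -/
noncomputable def Fval (v k : ℕ) (l0 l1 : ℝ) (π : ℕ → Fin v) : ℝ :=
  ∑ pq ∈ coincPairs v k π, (-l0 - l1 * phi k pq.1 * phi k pq.2)

open Classical in
/-- `s* = max{p : 1 ≤ p < (k+1)/2, λ₁φ(p)² > λ₀}`, `0` if no such `p` exists. -/
noncomputable def sstar (k : ℕ) (l0 l1 : ℝ) : ℕ :=
  Nat.findGreatest (fun p => 2 * p < k + 1 ∧ l0 < l1 * (phi k p) ^ 2) k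


/-! Group the coincidence pairs of an order by treatment. A class `C` of `n` positions contributes
`-λ₀ n(n-1)/2 - (λ₁/2)((∑_C φ)² - ∑_C φ²)`, which is at most `½ ∑_{p ∈ C} max(λ₁φ(p)² - λ₀, 0)`
because `(∑_C φ)² ≥ 0` and `n(n-1) ≥ n` once `n ≥ 2`. Hence `2F(π) ≤ ∑_{p=1}^k max(λ₁φ(p)² - λ₀, 0)`
for every order. As `φ(p)²` is symmetric under `p ↦ k+1-p` and decreases towards the middle, the
positive terms are those with `p ≤ s*` or `p ≥ k+1-s*`, so the bound is `∑_{p ≤ s*} (λ₁φ(p)² - λ₀)`.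
The order `π_{s*}`, whose only coincidences are the mirror pairs `(p, k+1-p)` with `p ≤ s*`, attains
it. -/

theorem two_mul_sum_pairs_lt {α R : Type*} [LinearOrder α] [CommRing R] (s : Finset α)
    (f : α → R) :
    2 * ∑ x ∈ s ×ˢ s with x.1 < x.2, f x.1 * f x.2 = (∑ i ∈ s, f i) ^ 2 - ∑ i ∈ s, f i ^ 2 := by
  set g : α → α → R := fun i j => if i < j then f i * f j else 0
  have trichotomy : ∀ i j, f i * f j = g i j + g j i + if i = j then f i ^ 2 else 0 := by
    intro i j
    rcases lt_trichotomy i j with h | rfl | h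
    · simp [g, h, h.ne, h.not_gt]
    · simp [g, sq]
    · simp [g, h, h.ne', h.not_gt, mul_comm]
  have hsq : (∑ i ∈ s, f i) ^ 2 =
      ∑ i ∈ s, ∑ j ∈ s, (g i j + g j i + if i = j then f i ^ 2 else 0) := by
    rw [sq, sum_mul_sum]
    exact sum_congr rfl fun i _ => sum_congr rfl fun j _ => trichotomy i j
  rw [hsq, sum_filter, sum_product]
  simp only [sum_add_distrib, sum_ite_eq]
  rw [sum_comm (f := fun i j => g j i)]
  simp [g, two_mul]

theorem two_mul_sum_pairs_lt_le_sum_max {α : Type*} [LinearOrder α] (s : Finset α) (f : α → ℝ)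
    {l0 l1 : ℝ} (hl0 : 0 ≤ l0) (hl1 : 0 ≤ l1) :
    2 * ∑ x ∈ s ×ˢ s with x.1 < x.2, (-l0 - l1 * f x.1 * f x.2) ≤
      ∑ i ∈ s, max (l1 * f i ^ 2 - l0) 0 := by
  have hmax_nonneg : 0 ≤ ∑ i ∈ s, max (l1 * f i ^ 2 - l0) 0 :=
    sum_nonneg fun _ _ => le_max_right _ _
  rcases le_or_gt #s 1 with hs | hs
  · have hempty : {x ∈ s ×ˢ s | x.1 < x.2} = ∅ := filter_eq_empty_iff.2 fun x hx => by
      rw [mem_product] at hx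
      exact (card_le_one.1 hs _ hx.1 _ hx.2).not_lt
    simpa [hempty] using hmax_nonneg
  · have hcard := two_mul_sum_pairs_lt s fun _ => (1 : ℝ)
    have hprod := two_mul_sum_pairs_lt s f
    have hmax : ∑ i ∈ s, (l1 * f i ^ 2 - l0) ≤ ∑ i ∈ s, max (l1 * f i ^ 2 - l0) 0 :=
      sum_le_sum fun _ _ => le_max_left _ _
    have hs' : (2 : ℝ) ≤ #s := by exact_mod_cast hs
    simp only [mul_one, sum_const, nsmul_eq_mul, one_pow] at hcard
    simp only [sum_sub_distrib, sum_const, nsmul_eq_mul, ← mul_sum, mul_assoc] at hmax ⊢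
    nlinarith [mul_nonneg hl1 (sq_nonneg (∑ i ∈ s, f i)),
      mul_nonneg hl0 (mul_nonneg (by positivity : (0 : ℝ) ≤ #s) (sub_nonneg.2 hs'))]

theorem coincPairs_filter_fst_eq {v k : ℕ} (π : ℕ → Fin v) (i : Fin v) :
    {x ∈ coincPairs v k π | π x.1 = i} =
      {x ∈ {p ∈ Icc 1 k | π p = i} ×ˢ {p ∈ Icc 1 k | π p = i} | x.1 < x.2} := by
  ext ⟨p, q⟩
  simp only [coincPairs, mem_filter, mem_product]
  constructor
  · rintro ⟨⟨⟨hp, hq⟩, hpq, hπ⟩, rfl⟩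
    exact ⟨⟨⟨hp, rfl⟩, hq, hπ.symm⟩, hpq⟩
  · rintro ⟨⟨⟨hp, rfl⟩, hq, hπ⟩, hpq⟩
    exact ⟨⟨⟨hp, hq⟩, hpq, hπ.symm⟩, rfl⟩

theorem two_mul_Fval_le_sum_max (v k : ℕ) {l0 l1 : ℝ} (hl0 : 0 ≤ l0) (hl1 : 0 ≤ l1)
    (π : ℕ → Fin v) :
    2 * Fval v k l0 l1 π ≤ ∑ p ∈ Icc 1 k, max (l1 * phi k p ^ 2 - l0) 0 := by
  rw [Fval, ← sum_fiberwise (coincPairs v k π) (fun x => π x.1), ← sum_fiberwise (Icc 1 k) π,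
    mul_sum]
  refine sum_le_sum fun i _ => ?_
  rw [coincPairs_filter_fst_eq]
  exact two_mul_sum_pairs_lt_le_sum_max _ _ hl0 hl1

theorem phi_reflect {k p : ℕ} (hp : p ≤ k + 1) : phi k (k + 1 - p) = -phi k p := by
  rw [phi, phi, Nat.cast_sub hp]
  push_cast
  ring

theorem phi_sq_le_phi_sq {k p q : ℕ} (hpq : p ≤ q) (hq : 2 * q ≤ k + 1) :
    phi k q ^ 2 ≤ phi k p ^ 2 := by
  have hpq' : (p : ℝ) ≤ q := by exact_mod_cast hpq
  have hq' : 2 * (q : ℝ) ≤ k + 1 := by exact_mod_cast hq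
  rw [phi, phi, mul_pow, mul_pow]
  exact mul_le_mul_of_nonneg_left (by nlinarith) (sq_nonneg _)

theorem sum_Icc_max_eq_two_mul_sum {g : ℕ → ℝ} {k s : ℕ} (hs : 2 * s ≤ k)
    (hsymm : ∀ p ∈ Icc 1 k, g (k + 1 - p) = g p) (hpos : ∀ p ∈ Icc 1 s, 0 ≤ g p)
    (hneg : ∀ p ∈ Ioc s (k - s), g p ≤ 0) :
    ∑ p ∈ Icc 1 k, max (g p) 0 = 2 * ∑ p ∈ Icc 1 s, g p := by
  have hIcc : ∀ n, Icc 1 n = Ioc 0 n := fun n => rfl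
  have hmid : ∑ p ∈ Ioc s (k - s), max (g p) 0 = 0 :=
    sum_eq_zero fun p hp => max_eq_right (hneg p hp)
  have hlow : ∑ p ∈ Ioc 0 s, max (g p) 0 = ∑ p ∈ Ioc 0 s, g p :=
    sum_congr rfl fun p hp => max_eq_left (hpos p hp)
  have hhigh : ∑ p ∈ Ioc (k - s) k, max (g p) 0 = ∑ p ∈ Ioc 0 s, max (g p) 0 := by
    refine sum_nbij' (fun p => k + 1 - p) (fun p => k + 1 - p) ?_ ?_ ?_ ?_ fun p hp => by
      rw [hsymm p (mem_Icc.2 (by rw [mem_Ioc] at hp; omega))]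
    all_goals intro p hp; simp only [mem_Ioc] at hp ⊢; omega
  rw [hIcc, hIcc, ← sum_Ioc_consecutive _ (Nat.zero_le (k - s)) (Nat.sub_le k s),
    ← sum_Ioc_consecutive _ (Nat.zero_le s) (by omega : s ≤ k - s), hmid, hhigh, hlow]
  ring

section sstar

variable {k : ℕ} {l0 l1 : ℝ}

theorem sstar_spec (h : sstar k l0 l1 ≠ 0) :
    2 * sstar k l0 l1 < k + 1 ∧ l0 < l1 * phi k (sstar k l0 l1) ^ 2 :=
  Nat.findGreatest_of_ne_zero rfl h

theorem two_mul_sstar_le : 2 * sstar k l0 l1 ≤ k := by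
  by_cases h : sstar k l0 l1 = 0
  · simp [h]
  · have := (sstar_spec h).1
    omega

theorem lt_mul_phi_sq_of_le_sstar (hl1 : 0 ≤ l1) {p : ℕ} (hp0 : 0 < p)
    (hp : p ≤ sstar k l0 l1) : l0 < l1 * phi k p ^ 2 := by
  have hs := sstar_spec (by omega : sstar k l0 l1 ≠ 0)
  exact hs.2.trans_le (mul_le_mul_of_nonneg_left (phi_sq_le_phi_sq hp (by omega)) hl1)

theorem mul_phi_sq_le_of_sstar_lt (hl0 : 0 ≤ l0) {p : ℕ} (hp : sstar k l0 l1 < p)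
    (hpk : p ≤ k - sstar k l0 l1) : l1 * phi k p ^ 2 ≤ l0 := by
  wlog h : 2 * p ≤ k + 1 generalizing p
  · rw [← neg_sq, ← phi_reflect (by omega)]
    exact this (by omega) (by omega) (by omega)
  rcases h.lt_or_eq with h | h
  · exact not_lt.1 fun hlt => Nat.findGreatest_is_greatest hp (by omega) ⟨h, hlt⟩
  · have hcenter : (2 * p : ℝ) = k + 1 := by exact_mod_cast h
    have hphi : phi k p = 0 := by rw [phi, hcenter]; ring
    simpa [hphi] using hl0

theorem sum_max_eq_two_mul_sum_sstar (hl0 : 0 ≤ l0) (hl1 : 0 ≤ l1) :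
    ∑ p ∈ Icc 1 k, max (l1 * phi k p ^ 2 - l0) 0 =
      2 * ∑ p ∈ Icc 1 (sstar k l0 l1), (l1 * phi k p ^ 2 - l0) := by
  refine sum_Icc_max_eq_two_mul_sum two_mul_sstar_le (fun p hp => ?_) (fun p hp => ?_)
    (fun p hp => ?_)
  · rw [phi_reflect (by simp only [mem_Icc] at hp; omega), neg_sq]
  · rw [mem_Icc] at hp
    exact sub_nonneg.2 (lt_mul_phi_sq_of_le_sstar hl1 hp.1 hp.2).le
  · rw [mem_Ioc] at hp
    exact sub_nonpos.2 (mul_phi_sq_le_of_sstar_lt hl0 hp.1 hp.2)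

end sstar

/-- Treatments are numbered from `0`; a position `p > k - s` repeats the treatment of `k + 1 - p`. -/
def mirrorIndex (k s p : ℕ) : ℕ := if p ≤ k - s then p - 1 else k - p

def mirrorOrder (v k s : ℕ) [NeZero v] (p : ℕ) : Fin v := Fin.ofNat v (mirrorIndex k s p)

section mirrorOrder

variable {v k s : ℕ}

theorem mirrorIndex_eq_iff (hs : 2 * s ≤ k) {p q : ℕ} (hp : 0 < p) (hpq : p < q) (hq : q ≤ k) :
    mirrorIndex k s p = mirrorIndex k s q ↔ p ≤ s ∧ q = k + 1 - p := by
  unfold mirrorIndex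
  split_ifs <;> omega

variable [NeZero v]

theorem mirrorOrder_eq_iff (hs : 2 * s ≤ k) (hsv : k - s ≤ v) {p q : ℕ} (hp : p ∈ Icc 1 k)
    (hq : q ∈ Icc 1 k) :
    mirrorOrder v k s p = mirrorOrder v k s q ↔ mirrorIndex k s p = mirrorIndex k s q := by
  have hlt : ∀ n ∈ Icc 1 k, mirrorIndex k s n < v := fun n hn => by
    rw [mem_Icc] at hn
    unfold mirrorIndex
    split_ifs <;> omega
  rw [mirrorOrder, mirrorOrder, Fin.ext_iff, Fin.val_ofNat, Fin.val_ofNat,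
    Nat.mod_eq_of_lt (hlt p hp), Nat.mod_eq_of_lt (hlt q hq)]

theorem mirrorOrder_injOn (hs : 2 * s ≤ k) (hsv : k - s ≤ v) :
    Set.InjOn (mirrorOrder v k s) (Set.Icc 1 (k - s)) := by
  intro p hp q hq hpq
  rw [Set.mem_Icc] at hp hq
  rw [mirrorOrder_eq_iff hs hsv (by rw [mem_Icc]; omega) (by rw [mem_Icc]; omega),
    mirrorIndex, mirrorIndex, if_pos hp.2, if_pos hq.2] at hpq
  omega

theorem mirrorOrder_reflect {p : ℕ} (hs : 2 * s ≤ k) (hp : p ∈ Icc 1 s) :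
    mirrorOrder v k s (k + 1 - p) = mirrorOrder v k s p := by
  rw [mem_Icc] at hp
  have hindex : mirrorIndex k s (k + 1 - p) = mirrorIndex k s p := by
    unfold mirrorIndex
    split_ifs <;> omega
  rw [mirrorOrder, mirrorOrder, hindex]

theorem coincPairs_mirrorOrder (hs : 2 * s ≤ k) (hsv : k - s ≤ v) :
    coincPairs v k (mirrorOrder v k s) = (Icc 1 s).image fun p => (p, k + 1 - p) := by
  ext ⟨p, q⟩
  simp only [coincPairs, mem_filter, mem_product, mem_image, Prod.mk.injEq]
  constructor
  · rintro ⟨⟨hp, hq⟩, hpq, hπ⟩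
    rw [mirrorOrder_eq_iff hs hsv hp hq, mirrorIndex_eq_iff hs (mem_Icc.1 hp).1 hpq
      (mem_Icc.1 hq).2] at hπ
    exact ⟨p, mem_Icc.2 ⟨(mem_Icc.1 hp).1, hπ.1⟩, rfl, hπ.2.symm⟩
  · rintro ⟨p, hp, rfl, rfl⟩
    have hp' := mem_Icc.1 hp
    refine ⟨⟨mem_Icc.2 ⟨hp'.1, by omega⟩, mem_Icc.2 ⟨by omega, by omega⟩⟩, by omega,
      (mirrorOrder_reflect hs hp).symm⟩

theorem Fval_mirrorOrder (hs : 2 * s ≤ k) (hsv : k - s ≤ v) (l0 l1 : ℝ) :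
    Fval v k l0 l1 (mirrorOrder v k s) = ∑ p ∈ Icc 1 s, (l1 * phi k p ^ 2 - l0) := by
  rw [Fval, coincPairs_mirrorOrder hs hsv, sum_image fun p _ q _ h => (Prod.mk.inj h).1]
  refine sum_congr rfl fun p hp => ?_
  rw [phi_reflect (by rw [mem_Icc] at hp; omega)]
  ring

end mirrorOrder

theorem optimal_order_small_k_general (v k : ℕ) (hkv : k < 2 * v) (l0 l1 : ℝ)
    (h0 : l0 ∈ Set.Icc 0 (1 / (k : ℝ))) (h1 : l1 ∈ Set.Icc (0 : ℝ) 1)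
    (hks : k ≤ v + sstar k l0 l1) :
    ∃ π : ℕ → Fin v,
      Set.InjOn π (Set.Icc 1 (k - sstar k l0 l1)) ∧
      (∀ p ∈ Icc 1 (sstar k l0 l1), π (k + 1 - p) = π p) ∧
      Fval v k l0 l1 π = ∑ p ∈ Icc 1 (sstar k l0 l1), (l1 * (phi k p) ^ 2 - l0) ∧
      ∀ π' : ℕ → Fin v,
        Fval v k l0 l1 π' ≤ ∑ p ∈ Icc 1 (sstar k l0 l1), (l1 * (phi k p) ^ 2 - l0) := by
  have : NeZero v := ⟨by omega⟩
  have hs : 2 * sstar k l0 l1 ≤ k := two_mul_sstar_le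
  have hsv : k - sstar k l0 l1 ≤ v := by omega
  refine ⟨mirrorOrder v k (sstar k l0 l1), mirrorOrder_injOn hs hsv,
    fun p hp => mirrorOrder_reflect hs hp, Fval_mirrorOrder hs hsv l0 l1, fun π' => ?_⟩
  have hbound := two_mul_Fval_le_sum_max v k h0.1 h1.1 π'
  rw [sum_max_eq_two_mul_sum_sstar h0.1 h1.1] at hbound
  linarith

theorem optimal_order_small_k (v k : ℕ) (hk : 2 ≤ k) (hkv : k < 2 * v) (l0 l1 : ℝ)
    (h0 : l0 ∈ Set.Icc 0 (1 / (k : ℝ))) (h1 : l1 ∈ Set.Icc (0 : ℝ) 1)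
    (hks : k ≤ v + sstar k l0 l1) :
    ∃ π : ℕ → Fin v,
      Set.InjOn π (Set.Icc 1 (k - sstar k l0 l1)) ∧
      (∀ p ∈ Icc 1 (sstar k l0 l1), π (k + 1 - p) = π p) ∧
      Fval v k l0 l1 π = ∑ p ∈ Icc 1 (sstar k l0 l1), (l1 * (phi k p) ^ 2 - l0) ∧
      ∀ π' : ℕ → Fin v,
        Fval v k l0 l1 π' ≤ ∑ p ∈ Icc 1 (sstar k l0 l1), (l1 * (phi k p) ^ 2 - l0) :=
  optimal_order_small_k_general v k hkv l0 l1 h0 h1 hks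
end
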